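/- Let n ≥ 1, let B be a finite list of bids on n goods, and let P ⊆ ℝ^n be a nonempty open convex set. Then the restriction of the indirect utility function f_B to P is convex if and only if there is no price vector q ∈ P and pair of distinct goods i, i' ∈ {0,1,…,n} at which the weights of the bids of B that are marginal on both i and i' at q sum to a negative number. -/

import Mathlib

open Finset

noncomputable section

variable {n : ℕ}

/-- Extend a value/price vector in `ℝ^n` by a 0-th coordinate (the reject good) equal to 0. -/
def extVec (b : Fin n → ℝ) : Fin (n + 1) → ℝ := Fin.cons 0 b

/-- Surplus of good `i` (in `{0,…,n}`) for value vector `b` at price `p`. -/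
def surplus (b p : Fin n → ℝ) (i : Fin (n + 1)) : ℝ := extVec b i - extVec p i

/-- Maximal surplus over all goods (including the reject good). -/
def maxSurplus (b p : Fin n → ℝ) : ℝ :=
  Finset.univ.sup' Finset.univ_nonempty (surplus b p)

/-- The bid with value vector `b` demands good `i` at price `p`. -/
def Demands (b p : Fin n → ℝ) (i : Fin (n + 1)) : Prop :=
  ∀ j, surplus b p j ≤ surplus b p i

open Classical in
/-- The set of goods demanded by value vector `b` at price `p`. -/
def demandedSet (b p : Fin n → ℝ) : Finset (Fin (n + 1)) :=
  Finset.univ.filter fun i => Demands b p i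

/-- Indirect utility function of a bid list (bids are pairs of value vector and weight). -/
def indirectUtility (B : List ((Fin n → ℝ) × ℝ)) (p : Fin n → ℝ) : ℝ :=
  (B.map fun bw => bw.2 * maxSurplus bw.1 p).sum

/-- Surplus gap of the bid `b` at `p`: maximal surplus minus the best surplus on
a non-demanded good (junk value when every good is demanded). -/
def surplusGap (b p : Fin n → ℝ) : ℝ :=
  maxSurplus b p - sSup (surplus b p '' {i | i ∉ demandedSet b p})

/-- `B` is `ε`-valid at `p` if its indirect utility function is convex on the open
`L∞`-ball of radius `ε` around `p`. -/
def epsValid (B : List ((Fin n → ℝ) × ℝ)) (p : Fin n → ℝ) (ε : ℝ) : Prop :=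
  ConvexOn ℝ {q : Fin n → ℝ | ‖q - p‖ < ε} (indirectUtility B)

open Classical in
/-- Sum of the weights of bids in `B` that are marginal on both `i` and `i'` at `p`. -/
def marginalWeight (B : List ((Fin n → ℝ) × ℝ)) (p : Fin n → ℝ) (i i' : Fin (n + 1)) : ℝ :=
  (B.map fun bw => if Demands bw.1 p i ∧ Demands bw.1 p i' then bw.2 else 0).sum

/-!
Each `maxSurplus b` is a maximum of affine functions of the price, so along a ray `p + s • v` the
indirect utility is affine for small `s ≥ 0`, with slope `∑ w • max (-v κ)` over the goods `κ`
each bid demands at `p`. The kink at `p` in direction `v` (the slopes in directions `v` and `-v`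
added) is thus `∑ w • (max v - min v)` over demanded goods, and convexity amounts to these kinks
being nonnegative. When every bid demands at most two goods the kink is
`½ ∑ i, ∑ i', |v i - v i'| * marginalWeight B p i i'`, so nonnegative marginal weights give the
chord inequality along every segment on which no bid demands three goods; such segments are dense,
since they only have to avoid finitely many hyperplanes, and continuity does the rest.
Conversely, after raising slightly all prices except those of `i` and `i'`, the bids marginal on
both demand exactly `{i, i'}` and no other bid demands both, so the kink in the direction of
good `i` is exactly `marginalWeight B q i i'`.
-/

open Filter Topology

section

variable {α : Type*}

lemma sup'_neg_add_sup'_of_eq_pair [DecidableEq α] {D : Finset α} (H : D.Nonempty) {a c : α}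
    (hD : D = {a, c}) (f : α → ℝ) : D.sup' H (fun κ => -f κ) + D.sup' H f = |f a - f c| := by
  subst hD
  rw [Finset.sup'_insert (H := Finset.singleton_nonempty c),
    Finset.sup'_insert (H := Finset.singleton_nonempty c), Finset.sup'_singleton,
    Finset.sup'_singleton, max_neg_neg]
  linarith [max_sub_min_eq_abs (f a) (f c), abs_sub_comm (f a) (f c)]

lemma sup'_neg_add_sup'_of_forall_eq {D : Finset α} (H : D.Nonempty) {f : α → ℝ}
    (hf : ∀ κ ∈ D, ∀ μ ∈ D, f κ = f μ) : D.sup' H (fun κ => -f κ) + D.sup' H f = 0 := by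
  obtain ⟨a, ha⟩ := id H
  rw [Finset.sup'_congr H rfl (g := fun _ => -f a) fun κ hκ => by rw [hf κ hκ a ha],
    Finset.sup'_congr H rfl (g := fun _ => f a) fun κ hκ => hf κ hκ a ha, Finset.sup'_const,
    Finset.sup'_const]
  ring

lemma two_mul_sup'_neg_add_sup' [DecidableEq α] {D : Finset α} (H : D.Nonempty)
    (hD : D.card ≤ 2) (f : α → ℝ) :
    2 * (D.sup' H (fun κ => -f κ) + D.sup' H f) = ∑ i ∈ D, ∑ j ∈ D, |f i - f j| := by
  obtain h | h : D.card = 1 ∨ D.card = 2 := by have := H.card_pos; omega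
  · obtain ⟨a, rfl⟩ := Finset.card_eq_one.1 h
    simp
  · obtain ⟨a, c, hac, rfl⟩ := Finset.card_eq_two.1 h
    simp only [sup'_neg_add_sup'_of_eq_pair H rfl, Finset.sum_pair hac, sub_self, abs_zero,
      abs_sub_comm (f c) (f a)]
    ring

end

lemma dense_setOf_forall_ne {E ι : Type*} [NormedAddCommGroup E] [NormedSpace ℝ E]
    [FiniteDimensional ℝ E] {S : Set ι} (hS : S.Finite) (ℓ : ι → E →ₗ[ℝ] ℝ) (c : ι → ℝ)
    (hℓ : ∀ m ∈ S, ℓ m ≠ 0) : Dense {x | ∀ m ∈ S, ℓ m x ≠ c m} := by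
  have hset : {x | ∀ m ∈ S, ℓ m x ≠ c m} = ⋂ m ∈ S, ℓ m ⁻¹' {c m}ᶜ := by
    ext x
    simp
  rw [hset]
  exact dense_biInter_of_isOpen
    (fun m _ => isOpen_compl_singleton.preimage (ℓ m).continuous_of_finiteDimensional)
    hS.countable fun m hm => (dense_compl_singleton (c m)).preimage
      ((ℓ m).isOpenMap_of_finiteDimensional (LinearMap.surjective_of_ne_zero (hℓ m hm)))

lemma le_secant_of_forall_eventually_two_mul_le {φ : ℝ → ℝ} (hφ : ContinuousOn φ (Set.Icc 0 1))
    (hmid : ∀ t ∈ Set.Ioo (0 : ℝ) 1, ∀ᶠ d in 𝓝[>] 0, 2 * φ t ≤ φ (t - d) + φ (t + d))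
    {t : ℝ} (ht : t ∈ Set.Icc (0 : ℝ) 1) : φ t ≤ (1 - t) * φ 0 + t * φ 1 := by
  let h : ℝ → ℝ := fun t => φ t - ((1 - t) * φ 0 + t * φ 1)
  suffices ∀ t ∈ Set.Icc (0 : ℝ) 1, h t ≤ 0 by linarith [this t ht]
  by_contra! ⟨t₀, ht₀, hpos⟩
  have hc : ContinuousOn h (Set.Icc 0 1) := hφ.sub (by fun_prop)
  obtain ⟨m, hm, hmax⟩ := isCompact_Icc.exists_isMaxOn ⟨t₀, ht₀⟩ hc
  obtain ⟨s, ⟨hs, hsm⟩, hgreatest⟩ := (isCompact_Icc.of_isClosed_subset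
    (hc.preimage_isClosed_of_isClosed isClosed_Icc (isClosed_singleton (x := h m)))
    Set.inter_subset_left).exists_isGreatest ⟨m, hm, rfl⟩
  -- at the largest maximiser `s` of `h`, the midpoint inequality forces `h (s + d) = h m`
  have hm_pos : 0 < h m := hpos.trans_le (hmax ht₀)
  have hs' : s ∈ Set.Ioo (0 : ℝ) 1 := by
    refine ⟨hs.1.lt_of_ne ?_, hs.2.lt_of_ne ?_⟩ <;> rintro rfl <;> simp [h] at hsm <;> linarith
  obtain ⟨d, hd, hd_lt, hd_mid⟩ := (eventually_mem_nhdsWithin.and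
    (((eventually_lt_nhds (lt_min hs'.1 (sub_pos.2 hs'.2))).filter_mono nhdsWithin_le_nhds).and
    (hmid s hs'))).exists
  have hd_lt' := lt_min_iff.1 hd_lt
  have hd_pos : (0 : ℝ) < d := hd
  have hleft : h (s - d) ≤ h m := hmax ⟨by linarith, by linarith [hs.2]⟩
  have hright : s + d ∈ Set.Icc (0 : ℝ) 1 := ⟨by linarith [hs.1], by linarith⟩
  have hsd : h (s + d) = h m := le_antisymm (hmax hright) (by
    simp only [h, Set.mem_preimage, Set.mem_singleton_iff] at hsm hleft ⊢
    linarith)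
  linarith [hgreatest ⟨hright, hsd⟩]

@[simp]
lemma extVec_add (u v : Fin n → ℝ) : extVec (u + v) = extVec u + extVec v := by
  ext κ; cases κ using Fin.cases <;> simp [extVec]

@[simp]
lemma extVec_smul (c : ℝ) (u : Fin n → ℝ) : extVec (c • u) = c • extVec u := by
  ext κ; cases κ using Fin.cases <;> simp [extVec]

@[simp]
lemma extVec_sub (u v : Fin n → ℝ) : extVec (u - v) = extVec u - extVec v := by
  ext κ; cases κ using Fin.cases <;> simp [extVec]

@[simp]
lemma extVec_neg (u : Fin n → ℝ) : extVec (-u) = -extVec u := by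
  simpa using extVec_smul (-1) u

lemma extVec_tail_sub (g : Fin (n + 1) → ℝ) (κ : Fin (n + 1)) :
    extVec (Fin.tail g - fun _ => g 0) κ = g κ - g 0 := by
  cases κ using Fin.cases <;> simp [extVec, Fin.tail]

lemma surplus_add_smul (b p v : Fin n → ℝ) (s : ℝ) (κ : Fin (n + 1)) :
    surplus b (p + s • v) κ = surplus b p κ - s * extVec v κ := by
  simp only [surplus, extVec_add, extVec_smul, Pi.add_apply, Pi.smul_apply, smul_eq_mul]
  ring

lemma surplus_add_smul_sub (b x y : Fin n → ℝ) (t : ℝ) (κ : Fin (n + 1)) :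
    surplus b (x + t • (y - x)) κ = (1 - t) * surplus b x κ + t * surplus b y κ := by
  rw [surplus_add_smul]
  simp only [surplus, extVec_sub, Pi.sub_apply]
  ring

lemma surplus_le_maxSurplus (b p : Fin n → ℝ) (κ : Fin (n + 1)) :
    surplus b p κ ≤ maxSurplus b p :=
  Finset.le_sup' _ (Finset.mem_univ κ)

lemma demands_iff (b p : Fin n → ℝ) (κ : Fin (n + 1)) :
    Demands b p κ ↔ surplus b p κ = maxSurplus b p :=
  ⟨fun h => le_antisymm (surplus_le_maxSurplus b p κ) (Finset.sup'_le _ _ fun j _ => h j),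
    fun h j => h ▸ surplus_le_maxSurplus b p j⟩

@[simp]
lemma mem_demandedSet {b p : Fin n → ℝ} {κ : Fin (n + 1)} :
    κ ∈ demandedSet b p ↔ Demands b p κ := by
  simp [demandedSet]

lemma demandedSet_nonempty (b p : Fin n → ℝ) : (demandedSet b p).Nonempty := by
  obtain ⟨κ, -, hκ⟩ := Finset.exists_mem_eq_sup' Finset.univ_nonempty (surplus b p)
  exact ⟨κ, mem_demandedSet.2 ((demands_iff b p κ).2 hκ.symm)⟩

lemma continuous_indirectUtility (B : List ((Fin n → ℝ) × ℝ)) :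
    Continuous (indirectUtility B) := by
  have hsurplus (b : Fin n → ℝ) (κ : Fin (n + 1)) : Continuous fun p => surplus b p κ := by
    cases κ using Fin.cases <;> simp only [surplus, extVec, Fin.cons_zero, Fin.cons_succ] <;>
      fun_prop
  have hmax (b : Fin n → ℝ) : Continuous (maxSurplus b) := by
    unfold maxSurplus
    fun_prop
  unfold indirectUtility
  induction B with
  | nil => simpa using continuous_const
  | cons bw B ih =>
    simp only [List.map_cons, List.sum_cons]
    exact ((hmax bw.1).const_mul bw.2).add ih

def maxSurplusSlope (b p v : Fin n → ℝ) : ℝ :=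
  (demandedSet b p).sup' (demandedSet_nonempty b p) fun κ => -extVec v κ

def indirectUtilitySlope (B : List ((Fin n → ℝ) × ℝ)) (p v : Fin n → ℝ) : ℝ :=
  (B.map fun bw => bw.2 * maxSurplusSlope bw.1 p v).sum

lemma maxSurplusSlope_neg (b p v : Fin n → ℝ) :
    maxSurplusSlope b p (-v) = (demandedSet b p).sup' (demandedSet_nonempty b p) (extVec v) := by
  simp [maxSurplusSlope]

lemma neg_extVec_le_maxSurplusSlope {b p : Fin n → ℝ} (v : Fin n → ℝ) {κ : Fin (n + 1)}
    (hκ : Demands b p κ) : -extVec v κ ≤ maxSurplusSlope b p v :=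
  Finset.le_sup' (fun κ => -extVec v κ) (mem_demandedSet.2 hκ)

lemma eventually_surplus_lt (b p v : Fin n → ℝ) :
    ∀ᶠ s in 𝓝 (0 : ℝ), ∀ κ, ¬ Demands b p κ →
      surplus b (p + s • v) κ < maxSurplus b p + s * maxSurplusSlope b p v := by
  refine eventually_all.2 fun κ => ?_
  by_cases hκ : Demands b p κ
  · exact Eventually.of_forall fun _ h => absurd hκ h
  have hlt : surplus b p κ < maxSurplus b p :=
    (surplus_le_maxSurplus b p κ).lt_of_ne fun h => hκ ((demands_iff b p κ).2 h)
  have hcont : Continuous fun s : ℝ =>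
      surplus b p κ - s * extVec v κ - (maxSurplus b p + s * maxSurplusSlope b p v) := by
    fun_prop
  filter_upwards [(hcont.tendsto 0).eventually_lt_const (u := 0) (by simpa using hlt)] with s hs _
  rw [surplus_add_smul]
  linarith

lemma eventually_maxSurplus_add_smul (b p v : Fin n → ℝ) :
    ∀ᶠ s in 𝓝[≥] (0 : ℝ),
      maxSurplus b (p + s • v) = maxSurplus b p + s * maxSurplusSlope b p v := by
  filter_upwards [nhdsWithin_le_nhds (eventually_surplus_lt b p v), self_mem_nhdsWithin]
    with s hlt (hs : 0 ≤ s)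
  obtain ⟨κ₀, hκ₀, hσ⟩ :=
    Finset.exists_mem_eq_sup' (demandedSet_nonempty b p) fun κ => -extVec v κ
  refine le_antisymm (Finset.sup'_le _ _ fun κ _ => ?_) ?_
  · by_cases hκ : Demands b p κ
    · rw [surplus_add_smul, (demands_iff b p κ).1 hκ]
      nlinarith [neg_extVec_le_maxSurplusSlope v hκ]
    · exact (hlt κ hκ).le
  · calc maxSurplus b p + s * maxSurplusSlope b p v = surplus b (p + s • v) κ₀ := by
          rw [surplus_add_smul, (demands_iff b p κ₀).1 (mem_demandedSet.1 hκ₀),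
            maxSurplusSlope, hσ]
          ring
      _ ≤ maxSurplus b (p + s • v) := surplus_le_maxSurplus _ _ _

lemma eventually_demandedSet_add_smul (b p v : Fin n → ℝ) :
    ∀ᶠ s in 𝓝[>] (0 : ℝ), demandedSet b (p + s • v) =
      (demandedSet b p).filter fun κ => ∀ μ ∈ demandedSet b p, extVec v κ ≤ extVec v μ := by
  filter_upwards [nhdsWithin_le_nhds (eventually_surplus_lt b p v),
    nhdsWithin_mono 0 Set.Ioi_subset_Ici_self (eventually_maxSurplus_add_smul b p v),
    self_mem_nhdsWithin] with s hlt hmax (hs : 0 < s)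
  ext κ
  simp only [Finset.mem_filter, mem_demandedSet, demands_iff b (p + s • v), hmax]
  by_cases hκ : Demands b p κ
  · have hslope : maxSurplusSlope b p v ≤ -extVec v κ ↔
        ∀ μ, Demands b p μ → extVec v κ ≤ extVec v μ := by
      simp only [maxSurplusSlope, Finset.sup'_le_iff, neg_le_neg_iff, mem_demandedSet]
    rw [surplus_add_smul, (demands_iff b p κ).1 hκ, ← hslope]
    constructor
    · intro h
      exact ⟨hκ, by nlinarith⟩
    · intro h
      nlinarith [neg_extVec_le_maxSurplusSlope v hκ, h.2]
  · simp only [hκ, false_and, iff_false]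
    exact (hlt κ hκ).ne

lemma eventually_indirectUtility_add_smul (B : List ((Fin n → ℝ) × ℝ)) (p v : Fin n → ℝ) :
    ∀ᶠ s in 𝓝[≥] (0 : ℝ),
      indirectUtility B (p + s • v) = indirectUtility B p + s * indirectUtilitySlope B p v := by
  filter_upwards [(eventually_all_finite B.finite_toSet).2 fun bw _ =>
    eventually_maxSurplus_add_smul bw.1 p v] with s hs
  simp only [indirectUtility, indirectUtilitySlope, ← List.sum_map_mul_left, ← List.sum_map_add]
  exact congrArg List.sum (List.map_congr_left fun bw hbw => by rw [hs bw hbw]; ring)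

lemma eventually_add_smul_mem {P : Set (Fin n → ℝ)} {p : Fin n → ℝ} (hp : P ∈ 𝓝 p)
    (v : Fin n → ℝ) : ∀ᶠ s in 𝓝 (0 : ℝ), p + s • v ∈ P :=
  ((continuous_const.add (continuous_id.smul continuous_const)).tendsto' 0 p
    (by simp)).eventually hp

lemma eventually_indirectUtility_add_add_neg (B : List ((Fin n → ℝ) × ℝ)) (p v : Fin n → ℝ) :
    ∀ᶠ s in 𝓝[>] (0 : ℝ),
      indirectUtility B (p + s • v) + indirectUtility B (p + s • -v) =
        2 * indirectUtility B p +
          s * (indirectUtilitySlope B p v + indirectUtilitySlope B p (-v)) := by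
  filter_upwards [nhdsWithin_mono 0 Set.Ioi_subset_Ici_self
      (eventually_indirectUtility_add_smul B p v),
    nhdsWithin_mono 0 Set.Ioi_subset_Ici_self (eventually_indirectUtility_add_smul B p (-v))]
    with s hpos hneg
  rw [hpos, hneg]
  ring

lemma indirectUtilitySlope_add_neg_nonneg_of_convexOn {B : List ((Fin n → ℝ) × ℝ)}
    {P : Set (Fin n → ℝ)} (hconv : ConvexOn ℝ P (indirectUtility B)) {p : Fin n → ℝ}
    (hp : P ∈ 𝓝 p) (v : Fin n → ℝ) :
    0 ≤ indirectUtilitySlope B p v + indirectUtilitySlope B p (-v) := by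
  obtain ⟨s, hs, hpos, hneg, hsum⟩ := (eventually_mem_nhdsWithin.and
    (((eventually_add_smul_mem hp v).filter_mono nhdsWithin_le_nhds).and
    (((eventually_add_smul_mem hp (-v)).filter_mono nhdsWithin_le_nhds).and
    (eventually_indirectUtility_add_add_neg B p v)))).exists
  have hmid := hconv.2 hpos hneg (by norm_num : (0 : ℝ) ≤ 1 / 2) (by norm_num : (0 : ℝ) ≤ 1 / 2)
    (by norm_num)
  rw [show (1 / 2 : ℝ) • (p + s • v) + (1 / 2 : ℝ) • (p + s • -v) = p by module,
    smul_eq_mul, smul_eq_mul] at hmid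
  exact le_of_mul_le_mul_left (by linarith) (show (0 : ℝ) < s from hs)

open Classical in
lemma two_mul_maxSurplusSlope_add_neg {b p : Fin n → ℝ} (hcard : (demandedSet b p).card ≤ 2)
    (v : Fin n → ℝ) :
    2 * (maxSurplusSlope b p v + maxSurplusSlope b p (-v)) =
      ∑ i, ∑ j, if Demands b p i ∧ Demands b p j then |extVec v i - extVec v j| else 0 := by
  rw [maxSurplusSlope_neg, maxSurplusSlope, two_mul_sup'_neg_add_sup' _ hcard]
  simp [demandedSet, Finset.sum_filter, ite_and, Finset.sum_ite_irrel]

open Classical in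
lemma two_mul_indirectUtilitySlope_add_neg {B : List ((Fin n → ℝ) × ℝ)} {p : Fin n → ℝ}
    (hcard : ∀ bw ∈ B, (demandedSet bw.1 p).card ≤ 2) (v : Fin n → ℝ) :
    2 * (indirectUtilitySlope B p v + indirectUtilitySlope B p (-v)) =
      ∑ i, ∑ j, |extVec v i - extVec v j| * marginalWeight B p i j := by
  induction B with
  | nil => simp [indirectUtilitySlope, marginalWeight]
  | cons bw B ih =>
    have hB := ih fun bw' h => hcard bw' (List.mem_cons_of_mem _ h)
    have hbw := two_mul_maxSurplusSlope_add_neg (hcard bw List.mem_cons_self) v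
    have hterm (i j : Fin (n + 1)) :
        |extVec v i - extVec v j| *
            ((if Demands bw.1 p i ∧ Demands bw.1 p j then bw.2 else 0) + marginalWeight B p i j) =
          bw.2 * (if Demands bw.1 p i ∧ Demands bw.1 p j then |extVec v i - extVec v j| else 0) +
            |extVec v i - extVec v j| * marginalWeight B p i j := by
      split_ifs <;> ring
    have hslope (w : Fin n → ℝ) : indirectUtilitySlope (bw :: B) p w =
        bw.2 * maxSurplusSlope bw.1 p w + indirectUtilitySlope B p w := rfl
    have hweight (i j : Fin (n + 1)) : marginalWeight (bw :: B) p i j =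
        (if Demands bw.1 p i ∧ Demands bw.1 p j then bw.2 else 0) + marginalWeight B p i j := rfl
    simp only [hslope, hweight, hterm, Finset.sum_add_distrib, ← Finset.mul_sum]
    linear_combination bw.2 * hbw + hB

lemma indirectUtilitySlope_add_neg_nonneg {B : List ((Fin n → ℝ) × ℝ)} {p : Fin n → ℝ}
    (hcard : ∀ bw ∈ B, (demandedSet bw.1 p).card ≤ 2)
    (hmw : ∀ i i' : Fin (n + 1), i ≠ i' → 0 ≤ marginalWeight B p i i') (v : Fin n → ℝ) :
    0 ≤ indirectUtilitySlope B p v + indirectUtilitySlope B p (-v) := by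
  have hsum : 0 ≤ ∑ i, ∑ j, |extVec v i - extVec v j| * marginalWeight B p i j :=
    Finset.sum_nonneg fun i _ => Finset.sum_nonneg fun j _ => by
      rcases eq_or_ne i j with rfl | hij
      · simp
      · exact mul_nonneg (abs_nonneg _) (hmw i j hij)
  linarith [two_mul_indirectUtilitySlope_add_neg hcard v]

open Classical in
lemma maxSurplusSlope_add_neg_eq_ite {b q q' z v : Fin n → ℝ} {i i' : Fin (n + 1)} {c d : ℝ}
    (hii : i ≠ i') (hz : ∀ κ, extVec z κ = c + if κ = i ∨ κ = i' then 0 else 1)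
    (hv : ∀ κ, extVec v κ = d + if κ = i then 1 else 0)
    (hD : demandedSet b q' = (demandedSet b q).filter
      fun κ => ∀ μ ∈ demandedSet b q, extVec z κ ≤ extVec z μ) :
    maxSurplusSlope b q' v + maxSurplusSlope b q' (-v) =
      if Demands b q i ∧ Demands b q i' then 1 else 0 := by
  have hmem (κ : Fin (n + 1)) : κ ∈ demandedSet b q' ↔
      Demands b q κ ∧ ∀ μ, Demands b q μ → extVec z κ ≤ extVec z μ := by
    simp [hD]
  have hz_min (μ : Fin (n + 1)) : extVec z i ≤ extVec z μ := by
    rw [hz, hz, if_pos (Or.inl rfl)]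
    split_ifs <;> norm_num
  have hz_eq : extVec z i' = extVec z i := by
    rw [hz, hz, if_pos (Or.inl rfl), if_pos (Or.inr rfl)]
  have hz_argmin (μ : Fin (n + 1)) (hμ : extVec z μ ≤ extVec z i) : μ = i ∨ μ = i' := by
    by_contra hne
    rw [hz, hz, if_neg hne, if_pos (Or.inl rfl)] at hμ
    linarith
  rw [maxSurplusSlope_neg, maxSurplusSlope]
  split_ifs with h
  · have hpair : demandedSet b q' = {i, i'} := by
      ext κ
      simp only [hmem, Finset.mem_insert, Finset.mem_singleton]
      constructor
      · exact fun hκ => hz_argmin κ (hκ.2 i h.1)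
      · rintro (rfl | rfl)
        · exact ⟨h.1, fun μ _ => hz_min μ⟩
        · exact ⟨h.2, fun μ _ => hz_eq ▸ hz_min μ⟩
    rw [sup'_neg_add_sup'_of_eq_pair _ hpair, hv, hv, if_pos rfl, if_neg hii.symm]
    norm_num
  · have hi (κ : Fin (n + 1)) (hκ : κ ∈ demandedSet b q') (hκi : κ = i) (μ : Fin (n + 1))
        (hμ : μ ∈ demandedSet b q') : μ = i := by
      subst hκi
      have hdem := ((hmem κ).1 hκ).1
      refine (hz_argmin μ (((hmem μ).1 hμ).2 κ hdem)).resolve_right fun hμi => h ⟨hdem, ?_⟩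
      exact hμi ▸ ((hmem μ).1 hμ).1
    refine sup'_neg_add_sup'_of_forall_eq _ fun κ hκ μ hμ => ?_
    by_cases hκi : κ = i
    · rw [hκi, hi κ hκ hκi μ hμ]
    · rw [hv, hv, if_neg hκi, if_neg fun hμi => hκi (hi μ hμ hμi κ hκ)]

theorem marginalWeight_nonneg_of_convexOn {B : List ((Fin n → ℝ) × ℝ)} {P : Set (Fin n → ℝ)}
    (hPopen : IsOpen P) (hconv : ConvexOn ℝ P (indirectUtility B)) {q : Fin n → ℝ} (hq : q ∈ P)
    {i i' : Fin (n + 1)} (hii : i ≠ i') : 0 ≤ marginalWeight B q i i' := by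
  -- `z` raises every price except those of `i` and `i'`, and `v` raises the price of `i`
  let χ : Fin (n + 1) → ℝ := fun κ => if κ = i ∨ κ = i' then 0 else 1
  let g : Fin (n + 1) → ℝ := fun κ => if κ = i then 1 else 0
  let z : Fin n → ℝ := Fin.tail χ - fun _ => χ 0
  let v : Fin n → ℝ := Fin.tail g - fun _ => g 0
  have hz (κ : Fin (n + 1)) : extVec z κ = -χ 0 + if κ = i ∨ κ = i' then 0 else 1 := by
    rw [extVec_tail_sub]
    ring
  have hv (κ : Fin (n + 1)) : extVec v κ = -g 0 + if κ = i then 1 else 0 := by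
    rw [extVec_tail_sub]
    ring
  obtain ⟨s, hsP, hD⟩ :=
    (((eventually_add_smul_mem (hPopen.mem_nhds hq) z).filter_mono nhdsWithin_le_nhds).and
      ((eventually_all_finite B.finite_toSet).2 fun bw _ =>
        eventually_demandedSet_add_smul bw.1 q z)).exists
  have hslope : indirectUtilitySlope B (q + s • z) v + indirectUtilitySlope B (q + s • z) (-v) =
      marginalWeight B q i i' := by
    simp only [indirectUtilitySlope, marginalWeight, ← List.sum_map_add]
    refine congrArg List.sum (List.map_congr_left fun bw hbw => ?_)
    rw [← mul_add, maxSurplusSlope_add_neg_eq_ite hii hz hv (hD bw hbw)]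
    split_ifs <;> simp
  exact hslope ▸ indirectUtilitySlope_add_neg_nonneg_of_convexOn hconv (hPopen.mem_nhds hsP) v

@[simps]
def extCoord (κ : Fin (n + 1)) : (Fin n → ℝ) →ₗ[ℝ] ℝ where
  toFun u := extVec u κ
  map_add' u v := by simp
  map_smul' c u := by simp

lemma exists_extCoord_sub_extCoord_eq (g : Fin (n + 1) → ℝ) :
    ∃ u : Fin n → ℝ, ∀ i j, (extCoord i - extCoord j) u = g i - g j :=
  ⟨Fin.tail g - fun _ => g 0, fun i j => by simp [extVec_tail_sub]⟩

/-- The determinant of the points `(surplus b x κ, surplus b y κ)`, `κ = i, j, k`; it vanishes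
whenever the three goods tie for `b` somewhere on the line through `x` and `y`. -/
def tieDet (b x y : Fin n → ℝ) (i j k : Fin (n + 1)) : ℝ :=
  (surplus b x i - surplus b x j) * (surplus b y j - surplus b y k) -
    (surplus b y i - surplus b y j) * (surplus b x j - surplus b x k)

lemma card_demandedSet_add_smul_sub_le_two {b x y : Fin n → ℝ}
    (h : ∀ i j k, i ≠ j → j ≠ k → i ≠ k → tieDet b x y i j k ≠ 0) (t : ℝ) :
    (demandedSet b (x + t • (y - x))).card ≤ 2 := by
  by_contra! hcard
  obtain ⟨i, j, k, hi, hj, hk, hij, hik, hjk⟩ := Finset.two_lt_card_iff.1 hcard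
  simp only [mem_demandedSet, demands_iff, surplus_add_smul_sub] at hi hj hk
  apply h i j k hij hjk hik
  unfold tieDet
  linear_combination
    (surplus b y j - surplus b y k - (surplus b x j - surplus b x k)) * (hi - hj) -
      (surplus b y i - surplus b y j - (surplus b x i - surplus b x j)) * (hj - hk)

lemma exists_dist_lt_surplus_ne (B : List ((Fin n → ℝ) × ℝ)) (x : Fin n → ℝ) {ε : ℝ}
    (hε : 0 < ε) : ∃ x', dist x' x < ε ∧
      ∀ bw ∈ B, ∀ i j, i ≠ j → surplus bw.1 x' i ≠ surplus bw.1 x' j := by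
  obtain ⟨x', hx', hx'x⟩ := (dense_setOf_forall_ne
    (S := {m : ((Fin n → ℝ) × ℝ) × Fin (n + 1) × Fin (n + 1) | m.1 ∈ B ∧ m.2.1 ≠ m.2.2})
    ((B.finite_toSet.prod Set.finite_univ).subset fun m hm => ⟨hm.1, trivial⟩)
    (fun m => extCoord m.2.1 - extCoord m.2.2)
    (fun m => extVec m.1.1 m.2.1 - extVec m.1.1 m.2.2)
    fun m hm h0 => by
      obtain ⟨u, hu⟩ := exists_extCoord_sub_extCoord_eq fun κ => if κ = m.2.1 then (1 : ℝ) else 0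
      simpa [hu, hm.2.symm] using LinearMap.congr_fun h0 u).exists_dist_lt x hε
  refine ⟨x', dist_comm x' x ▸ hx'x, fun bw hbw i j hij h0 => hx' (bw, i, j) ⟨hbw, hij⟩ ?_⟩
  simp only [surplus] at h0
  simp only [extCoord_apply, LinearMap.sub_apply]
  linarith

lemma exists_dist_lt_tieDet_ne_zero (B : List ((Fin n → ℝ) × ℝ)) {x : Fin n → ℝ}
    (hx : ∀ bw ∈ B, ∀ i j, i ≠ j → surplus bw.1 x i ≠ surplus bw.1 x j) (y : Fin n → ℝ)
    {ε : ℝ} (hε : 0 < ε) : ∃ y', dist y' y < ε ∧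
      ∀ bw ∈ B, ∀ i j k, i ≠ j → j ≠ k → i ≠ k → tieDet bw.1 x y' i j k ≠ 0 := by
  let α (m : ((Fin n → ℝ) × ℝ) × Fin (n + 1) × Fin (n + 1) × Fin (n + 1)) : ℝ :=
    surplus m.1.1 x m.2.1 - surplus m.1.1 x m.2.2.1
  let β (m : ((Fin n → ℝ) × ℝ) × Fin (n + 1) × Fin (n + 1) × Fin (n + 1)) : ℝ :=
    surplus m.1.1 x m.2.2.1 - surplus m.1.1 x m.2.2.2
  -- `tieDet bw.1 x y' i j k` is affine in `y'`, and its linear part is nonzero because `α ≠ 0`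
  obtain ⟨y', hy', hy'y⟩ := (dense_setOf_forall_ne
    (S := {m : ((Fin n → ℝ) × ℝ) × Fin (n + 1) × Fin (n + 1) × Fin (n + 1) |
      m.1 ∈ B ∧ m.2.1 ≠ m.2.2.1 ∧ m.2.2.1 ≠ m.2.2.2 ∧ m.2.1 ≠ m.2.2.2})
    ((B.finite_toSet.prod Set.finite_univ).subset fun m hm => ⟨hm.1, trivial⟩)
    (fun m => α m • (extCoord m.2.2.1 - extCoord m.2.2.2) -
      β m • (extCoord m.2.1 - extCoord m.2.2.1))
    (fun m => α m * (extVec m.1.1 m.2.2.1 - extVec m.1.1 m.2.2.2) -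
      β m * (extVec m.1.1 m.2.1 - extVec m.1.1 m.2.2.1))
    fun m hm h0 => by
      obtain ⟨u, hu⟩ :=
        exists_extCoord_sub_extCoord_eq fun κ => if κ = m.2.2.2 then (1 : ℝ) else 0
      have := LinearMap.congr_fun h0 u
      simp only [LinearMap.sub_apply, LinearMap.smul_apply, hu, smul_eq_mul, if_true,
        if_neg hm.2.2.1, if_neg hm.2.2.2, LinearMap.zero_apply] at this
      refine hx m.1 hm.1 _ _ hm.2.1 (sub_eq_zero.1 ?_)
      simp only [α] at this
      linarith).exists_dist_lt y hε
  refine ⟨y', dist_comm y' y ▸ hy'y, fun bw hbw i j k hij hjk hik h0 =>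
    hy' (bw, i, j, k) ⟨hbw, hij, hjk, hik⟩ ?_⟩
  simp only [tieDet, surplus] at h0
  simp only [LinearMap.sub_apply, LinearMap.smul_apply, extCoord_apply, smul_eq_mul, α, β,
    surplus]
  linarith

lemma indirectUtility_add_smul_sub_le {B : List ((Fin n → ℝ) × ℝ)} {P : Set (Fin n → ℝ)}
    (hPconv : Convex ℝ P)
    (hmw : ∀ q ∈ P, ∀ i i' : Fin (n + 1), i ≠ i' → 0 ≤ marginalWeight B q i i')
    {x y : Fin n → ℝ} (hx : x ∈ P) (hy : y ∈ P)
    (hgen : ∀ bw ∈ B, ∀ i j k, i ≠ j → j ≠ k → i ≠ k → tieDet bw.1 x y i j k ≠ 0)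
    {t : ℝ} (ht : t ∈ Set.Icc (0 : ℝ) 1) :
    indirectUtility B (x + t • (y - x)) ≤
      (1 - t) * indirectUtility B x + t * indirectUtility B y := by
  have hφ : Continuous fun t : ℝ => indirectUtility B (x + t • (y - x)) :=
    (continuous_indirectUtility B).comp (by fun_prop)
  refine (le_secant_of_forall_eventually_two_mul_le hφ.continuousOn (fun s hs => ?_) ht).trans
    (by simp)
  have hslope := indirectUtilitySlope_add_neg_nonneg
    (fun bw hbw => card_demandedSet_add_smul_sub_le_two (hgen bw hbw) s)
    (hmw _ (hPconv.add_smul_sub_mem hx hy (Set.Ioo_subset_Icc_self hs))) (y - x)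
  filter_upwards [eventually_indirectUtility_add_add_neg B (x + s • (y - x)) (y - x),
    self_mem_nhdsWithin] with d hd (hd_pos : 0 < d)
  rw [show x + (s - d) • (y - x) = x + s • (y - x) + d • -(y - x) by module,
    show x + (s + d) • (y - x) = x + s • (y - x) + d • (y - x) by module]
  nlinarith

theorem convexOn_of_marginalWeight_nonneg {B : List ((Fin n → ℝ) × ℝ)} {P : Set (Fin n → ℝ)}
    (hPopen : IsOpen P) (hPconv : Convex ℝ P)
    (hmw : ∀ q ∈ P, ∀ i i' : Fin (n + 1), i ≠ i' → 0 ≤ marginalWeight B q i i') :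
    ConvexOn ℝ P (indirectUtility B) := by
  refine ⟨hPconv, fun x hx y hy a b ha hb hab => ?_⟩
  obtain rfl := eq_sub_of_add_eq hab
  let F : (Fin n → ℝ) × (Fin n → ℝ) → ℝ := fun q =>
    (1 - b) * indirectUtility B q.1 + b * indirectUtility B q.2 -
      indirectUtility B ((1 - b) • q.1 + b • q.2)
  have hF : Continuous F := by
    have := continuous_indirectUtility B
    fun_prop
  suffices 0 ≤ F (x, y) by
    simp only [F, smul_eq_mul] at this ⊢
    linarith
  -- the chord inequality is a closed condition on `(x, y)` and holds at generic pairs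
  refine (isClosed_le continuous_const hF).closure_subset (Metric.mem_closure_iff.2 fun ε hε => ?_)
  obtain ⟨r, hr, hrx⟩ := Metric.isOpen_iff.1 hPopen x hx
  obtain ⟨r', hr', hry⟩ := Metric.isOpen_iff.1 hPopen y hy
  obtain ⟨x', hx', hx'_ne⟩ := exists_dist_lt_surplus_ne B x (lt_min hε (lt_min hr hr'))
  obtain ⟨y', hy', hgen⟩ := exists_dist_lt_tieDet_ne_zero B hx'_ne y (lt_min hε (lt_min hr hr'))
  have hx'P : x' ∈ P := hrx (Metric.mem_ball.2 (hx'.trans_le ((min_le_right _ _).trans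
    (min_le_left _ _))))
  have hy'P : y' ∈ P := hry (Metric.mem_ball.2 (hy'.trans_le ((min_le_right _ _).trans
    (min_le_right _ _))))
  refine ⟨(x', y'), ?_, ?_⟩
  · have hchord := indirectUtility_add_smul_sub_le hPconv hmw hx'P hy'P hgen ⟨hb, by linarith⟩
    rw [show x' + b • (y' - x') = (1 - b) • x' + b • y' by module] at hchord
    show 0 ≤ F (x', y')
    linarith
  · rw [Prod.dist_eq, dist_comm x, dist_comm y]
    exact max_lt (hx'.trans_le (min_le_left _ _)) (hy'.trans_le (min_le_left _ _))

theorem stmt1_general (n : ℕ) (B : List ((Fin n → ℝ) × ℝ))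
    (P : Set (Fin n → ℝ)) (hPopen : IsOpen P) (hPconv : Convex ℝ P) :
    ConvexOn ℝ P (indirectUtility B) ↔
      ∀ q ∈ P, ∀ (i i' : Fin (n + 1)), i ≠ i' → 0 ≤ marginalWeight B q i i' :=
  ⟨fun hconv _ hq _ _ hii => marginalWeight_nonneg_of_convexOn hPopen hconv hq hii,
    convexOn_of_marginalWeight_nonneg hPopen hPconv⟩

/-- For a finite list of (±1-weighted) bids on `n ≥ 1` goods and a nonempty
open convex set `P ⊆ ℝ^n`, the restriction of the indirect utility function `f_B` to `P` is
convex iff at every price `q ∈ P` and every pair of distinct goods `i ≠ i'` in `{0,…,n}`,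
the weights of the bids marginal on both `i` and `i'` at `q` sum to a non-negative number. -/
theorem stmt1 (n : ℕ) (hn : 1 ≤ n) (B : List ((Fin n → ℝ) × ℝ))
    (hw : ∀ bw ∈ B, bw.2 = 1 ∨ bw.2 = -1)
    (P : Set (Fin n → ℝ)) (hPne : P.Nonempty) (hPopen : IsOpen P) (hPconv : Convex ℝ P) :
    ConvexOn ℝ P (indirectUtility B) ↔
      ∀ q ∈ P, ∀ (i i' : Fin (n + 1)), i ≠ i' → 0 ≤ marginalWeight B q i i' :=
  stmt1_general n B P hPopen hPconv

end
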